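/- arXiv:1810.07755 — 2 statements merged into one kernel-verified Lean document; each statement's English description precedes it below -/
import Mathlib

section
/- Let T be a flow on a set X, let P : X → ι be a map into a finite index type, let R > 1 and 0 < ε < 1/2, and let x, y ∈ X. If I_R(x) and I_R(y) are (ε,P)-matchable, then I_R(y) and I_R(x) are (2ε,P)-matchable (the inverse of an (ε,P)-matching is a (2ε,P)-matching). -/
/-!
The reverse matching is `φ = ψ⁻¹` on `B = ψ(A)`. Since `ψ` is strictly increasing and Lipschitz on
`A`, the Lusin–Souslin theorem makes `B` measurable; the measure conditions for `(B, φ)` are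
those for `(ψ(A), A)` read backwards; and the slopes of `φ` lie in
`[(1+ε)⁻¹, (1-ε)⁻¹] ⊆ [1-2ε, 1+2ε]` as long as `0 ≤ ε ≤ 1/2`.
-/

open MeasureTheory Set

/-- An `(ε,P)`-matching from the orbit segment `I_R(x)` onto `I_R(y)`:
a measurable set `A ⊆ [0,R]` of measure `> (1-ε)R` together with a map
`ψ : A → [0,R]` which is bi-Lipschitz with constants `1-ε`, `1+ε`, whose image
has measure `> (1-ε)R`, and which matches the `P`-labels along the orbits. -/
def IsMatching {X : Type*} {ι : Type*} (T : ℝ → X → X) (P : X → ι)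
    (R ε : ℝ) (x y : X) (A : Set ℝ) (ψ : ℝ → ℝ) : Prop :=
  MeasurableSet A ∧ A ⊆ Set.Icc 0 R ∧
  volume A > ENNReal.ofReal ((1 - ε) * R) ∧
  (∀ t ∈ A, ψ t ∈ Set.Icc 0 R) ∧
  (∀ s ∈ A, ∀ t ∈ A, s ≤ t →
    (1 - ε) * (t - s) ≤ ψ t - ψ s ∧ ψ t - ψ s ≤ (1 + ε) * (t - s)) ∧
  volume (ψ '' A) > ENNReal.ofReal ((1 - ε) * R) ∧
  (∀ t ∈ A, P (T t x) = P (T (ψ t) y))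

/-- `I_R(x)` and `I_R(y)` are `(ε,P)`-matchable. -/
def Matchable {X : Type*} {ι : Type*} (T : ℝ → X → X) (P : X → ι)
    (R ε : ℝ) (x y : X) : Prop :=
  ∃ (A : Set ℝ) (ψ : ℝ → ℝ), IsMatching T P R ε x y A ψ

def SlopeBoundedOn (a b : ℝ) (ψ : ℝ → ℝ) (A : Set ℝ) : Prop :=
  ∀ s ∈ A, ∀ t ∈ A, s ≤ t → a * (t - s) ≤ ψ t - ψ s ∧ ψ t - ψ s ≤ b * (t - s)

namespace SlopeBoundedOn

variable {a b : ℝ} {ψ : ℝ → ℝ} {A : Set ℝ}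

lemma mono_const {a' b' : ℝ} (h : SlopeBoundedOn a b ψ A) (ha : a' ≤ a) (hb : b ≤ b') :
    SlopeBoundedOn a' b' ψ A := by
  intro s hs t ht hst
  obtain ⟨hlo, hhi⟩ := h s hs t ht hst
  have hts : 0 ≤ t - s := sub_nonneg.2 hst
  exact ⟨(mul_le_mul_of_nonneg_right ha hts).trans hlo,
    hhi.trans (mul_le_mul_of_nonneg_right hb hts)⟩

lemma strictMonoOn (h : SlopeBoundedOn a b ψ A) (ha : 0 < a) : StrictMonoOn ψ A := by
  intro s hs t ht hst
  have := (h s hs t ht hst.le).1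
  nlinarith

lemma lipschitzOnWith (h : SlopeBoundedOn a b ψ A) (ha : 0 ≤ a) :
    LipschitzOnWith (Real.toNNReal b) ψ A := by
  have key : ∀ s ∈ A, ∀ t ∈ A, s ≤ t → |ψ t - ψ s| ≤ b * |t - s| := by
    intro s hs t ht hst
    obtain ⟨hlo, hhi⟩ := h s hs t ht hst
    have hts : 0 ≤ t - s := sub_nonneg.2 hst
    rw [abs_of_nonneg ((mul_nonneg ha hts).trans hlo), abs_of_nonneg hts]
    exact hhi
  refine LipschitzOnWith.of_dist_le_mul fun s hs t ht => ?_
  rw [Real.dist_eq, Real.dist_eq]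
  refine le_trans ?_ (mul_le_mul_of_nonneg_right (Real.le_coe_toNNReal b) (abs_nonneg _))
  rcases le_total s t with hst | hts
  · rw [abs_sub_comm, abs_sub_comm s]
    exact key s hs t ht hst
  · exact key t ht s hs hts

lemma invFunOn (h : SlopeBoundedOn a b ψ A) (ha : 0 < a) :
    SlopeBoundedOn b⁻¹ a⁻¹ (Function.invFunOn ψ A) (ψ '' A) := by
  rintro _ ⟨s, hs, rfl⟩ _ ⟨t, ht, rfl⟩ hst
  have hmono := h.strictMonoOn ha
  have hinv : ∀ r ∈ A, Function.invFunOn ψ A (ψ r) = r := fun r hr =>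
    hmono.injOn.leftInvOn_invFunOn hr
  rw [hinv s hs, hinv t ht]
  have hst' : s ≤ t := (hmono.le_iff_le hs ht).1 hst
  obtain ⟨hlo, hhi⟩ := h s hs t ht hst'
  rcases hst'.lt_or_eq with hlt | rfl
  · have hpos : 0 < t - s := sub_pos.2 hlt
    have hb : 0 < b := pos_of_mul_pos_left ((mul_pos ha hpos).trans_le (hlo.trans hhi)) hpos.le
    constructor
    · rw [inv_mul_le_iff₀ hb]
      exact hhi
    · rw [le_inv_mul_iff₀ ha]
      exact hlo
  · simp

end SlopeBoundedOn

lemma IsMatching.matchable_swap {X ι : Type*} {T : ℝ → X → X} {P : X → ι} {R ε : ℝ} {x y : X}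
    {A : Set ℝ} {ψ : ℝ → ℝ} (h : IsMatching T P R ε x y A ψ) (hε : 0 ≤ ε) (hε' : ε ≤ 1 / 2) :
    Matchable T P R (2 * ε) y x := by
  obtain ⟨hAm, hA, hAvol, hψA, hslope, hψAvol, hlabel⟩ := h
  replace hslope : SlopeBoundedOn (1 - ε) (1 + ε) ψ A := hslope
  have h1ε : 0 < 1 - ε := by linarith
  have hinj : InjOn ψ A := (hslope.strictMonoOn h1ε).injOn
  have hinv : ∀ r ∈ A, Function.invFunOn ψ A (ψ r) = r := fun r hr =>
    hinj.leftInvOn_invFunOn hr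
  have hR : 0 ≤ R := by
    obtain ⟨t, ht⟩ := nonempty_of_measure_ne_zero (ne_bot_of_gt hAvol)
    exact (hA ht).1.trans (hA ht).2
  have hvol : ENNReal.ofReal ((1 - 2 * ε) * R) ≤ ENNReal.ofReal ((1 - ε) * R) :=
    ENNReal.ofReal_le_ofReal (by nlinarith)
  refine ⟨ψ '' A, Function.invFunOn ψ A,
    hAm.image_of_continuousOn_injOn (hslope.lipschitzOnWith h1ε.le).continuousOn hinj,
    image_subset_iff.2 hψA, hvol.trans_lt hψAvol, ?_, ?_, ?_, ?_⟩
  · rintro _ ⟨t, ht, rfl⟩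
    rw [hinv t ht]
    exact hA ht
  · refine (hslope.invFunOn h1ε).mono_const ?_ ?_
    · rw [inv_eq_one_div, le_div_iff₀ (by linarith)]
      nlinarith
    · rw [inv_eq_one_div, div_le_iff₀ h1ε]
      nlinarith
  · rw [hinj.invFunOn_image Subset.rfl]
    exact hvol.trans_lt hAvol
  · rintro _ ⟨t, ht, rfl⟩
    rw [hinv t ht]
    exact (hlabel t ht).symm

theorem matchable_symm_general {X ι : Type*}
    (T : ℝ → X → X)
    (P : X → ι) (R ε : ℝ) (hε : 0 < ε) (hε' : ε < 1 / 2)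
    (x y : X) (hxy : Matchable T P R ε x y) :
    Matchable T P R (2 * ε) y x := by
  obtain ⟨A, ψ, h⟩ := hxy
  exact h.matchable_swap hε.le hε'.le

/-- If `I_R(x)` and `I_R(y)` are `(ε,P)`-matchable, then `I_R(y)` and `I_R(x)`
are `(2ε,P)`-matchable: the inverse of an `(ε,P)`-matching is a `(2ε,P)`-matching. -/
theorem matchable_symm {X ι : Type*} [Finite ι]
    (T : ℝ → X → X) (hT0 : ∀ x, T 0 x = x)
    (hTadd : ∀ s t x, T (s + t) x = T s (T t x))
    (P : X → ι) (R ε : ℝ) (hR : 1 < R) (hε : 0 < ε) (hε' : ε < 1 / 2)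
    (x y : X) (hxy : Matchable T P R ε x y) :
    Matchable T P R (2 * ε) y x :=
  matchable_symm_general T P R ε hε hε' x y hxy
end

section
/- Let T be a flow on a set X preserving a probability measure μ, let P : X → ι be a map into a finite index type, let R > 1, 0 < ε ≤ 1/10, and c > 0. For x ∈ X and δ > 0 let B_R(x, δ) = {y ∈ X : I_R(x) and I_R(y) are (δ,P)-matchable}, and assume each such set is measurable. If μ(B_R(x, ε)) ≥ c for every x ∈ X, then there exist finitely many points x_1, …, x_n ∈ X with n ≤ ⌊1/c⌋ such that X = ⋃_{i=1}^n B_R(x_i, 10ε). -/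
/-!
Two points whose `ε`-balls meet are `10ε`-matchable: invert one matching and compose it with
the other. Matchings are bi-Lipschitz with constants close to `1`, so the parts of `[0, R]` lost
in the composition have measure `O(εR)`. A family of points with pairwise disjoint `ε`-balls has
at most `⌊1/c⌋` members, since each ball has measure at least `c`; for a largest such family,
every `ε`-ball meets one of the family's balls.
-/

open MeasureTheory Set

open Function

theorem ContinuousOn.measurableSet_inter_preimage {α γ : Type*} [TopologicalSpace α]
    [MeasurableSpace α] [OpensMeasurableSpace α] [TopologicalSpace γ] [MeasurableSpace γ]
    [BorelSpace γ] {f : α → γ} {s : Set α} {t : Set γ} (hf : ContinuousOn f s)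
    (hs : MeasurableSet s) (ht : MeasurableSet t) : MeasurableSet (s ∩ f ⁻¹' t) := by
  classical
  rcases s.eq_empty_or_nonempty with rfl | ⟨x₀, -⟩
  · simp
  rw [(piecewise_eqOn s f fun _ ↦ f x₀).symm.inter_preimage_eq]
  exact hs.inter ((hf.measurable_piecewise continuousOn_const hs) ht)

theorem LipschitzOnWith.volume_image_le {K : NNReal} {f : ℝ → ℝ} {s : Set ℝ}
    (hf : LipschitzOnWith K f s) : volume (f '' s) ≤ K * volume s := by
  simpa [hausdorffMeasure_real] using hf.hausdorffMeasure_image_le (d := 1) zero_le_one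

theorem volume_Icc_sdiff_le {a b r : ℝ} {S : Set ℝ} (hS : S ⊆ Icc a b) (hSm : MeasurableSet S)
    (hr : 0 ≤ r) (h : ENNReal.ofReal r ≤ volume S) :
    volume (Icc a b \ S) ≤ ENNReal.ofReal (b - a - r) := by
  rw [measure_sdiff hS hSm.nullMeasurableSet (measure_ne_top_of_subset hS measure_Icc_lt_top.ne),
    Real.volume_Icc, ENNReal.ofReal_sub _ hr]
  exact tsub_le_tsub_left h _

theorem ENNReal.ofReal_lt_of_le_add {u v w : ENNReal} {r s k : ℝ} (hu : ENNReal.ofReal r < u)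
    (huvw : u ≤ v + w) (hw : w ≤ ENNReal.ofReal k) (hs : 0 ≤ s) (hk : 0 ≤ k) (hskr : s + k ≤ r) :
    ENNReal.ofReal s < v := by
  by_contra! hv
  have : u ≤ ENNReal.ofReal r := calc
    u ≤ ENNReal.ofReal s + ENNReal.ofReal k := huvw.trans (add_le_add hv hw)
    _ = ENNReal.ofReal (s + k) := (ENNReal.ofReal_add hs hk).symm
    _ ≤ ENNReal.ofReal r := ENNReal.ofReal_le_ofReal hskr
  exact hu.not_ge this

def IncrementsBetweenOn (a b : ℝ) (f : ℝ → ℝ) (s : Set ℝ) : Prop :=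
  ∀ x ∈ s, ∀ y ∈ s, x ≤ y → a * (y - x) ≤ f y - f x ∧ f y - f x ≤ b * (y - x)

namespace IncrementsBetweenOn

variable {a b a' b' : ℝ} {f g : ℝ → ℝ} {s t : Set ℝ}

theorem mono (hf : IncrementsBetweenOn a b f s) (hts : t ⊆ s) : IncrementsBetweenOn a b f t :=
  fun x hx y hy hxy ↦ hf x (hts hx) y (hts hy) hxy

theorem weaken (hf : IncrementsBetweenOn a b f s) (ha : a' ≤ a) (hb : b ≤ b') :
    IncrementsBetweenOn a' b' f s := by
  intro x hx y hy hxy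
  have := hf x hx y hy hxy
  constructor <;> nlinarith

theorem injOn (hf : IncrementsBetweenOn a b f s) (ha : 0 < a) : InjOn f s := by
  intro x hx y hy hfxy
  rcases le_total x y with hxy | hyx
  · nlinarith [(hf x hx y hy hxy).1]
  · nlinarith [(hf y hy x hx hyx).1]

theorem dist_le_and_mul_dist_le (hf : IncrementsBetweenOn a b f s) (ha : 0 ≤ a) {x y : ℝ}
    (hx : x ∈ s) (hy : y ∈ s) :
    dist (f x) (f y) ≤ b * dist x y ∧ a * dist x y ≤ dist (f x) (f y) := by
  wlog hxy : x ≤ y generalizing x y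
  · simpa only [dist_comm] using this hy hx (le_of_not_ge hxy)
  obtain ⟨hlow, hup⟩ := hf x hx y hy hxy
  have hmono : 0 ≤ f y - f x := by nlinarith [mul_nonneg ha (sub_nonneg.2 hxy)]
  rw [dist_comm, Real.dist_eq, dist_comm, Real.dist_eq, abs_of_nonneg hmono,
    abs_of_nonneg (sub_nonneg.2 hxy)]
  exact ⟨hup, hlow⟩

theorem lipschitzOnWith (hf : IncrementsBetweenOn a b f s) (ha : 0 ≤ a) :
    LipschitzOnWith b.toNNReal f s :=
  LipschitzOnWith.of_dist_le' fun _ hx _ hy ↦ (hf.dist_le_and_mul_dist_le ha hx hy).1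

theorem lipschitzOnWith_invFunOn (hf : IncrementsBetweenOn a b f s) (ha : 0 < a) :
    LipschitzOnWith a⁻¹.toNNReal (invFunOn f s) (f '' s) := by
  refine LipschitzOnWith.of_dist_le' fun u hu v hv ↦ ?_
  have hu' := invFunOn_mem hu
  have hv' := invFunOn_mem hv
  have := (hf.dist_le_and_mul_dist_le ha.le hu' hv').2
  rw [invFunOn_eq hu, invFunOn_eq hv] at this
  rw [inv_mul_eq_div, le_div_iff₀ ha, mul_comm]
  exact this

theorem volume_image_le (hf : IncrementsBetweenOn a b f s) (ha : 0 ≤ a) :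
    volume (f '' s) ≤ ENNReal.ofReal b * volume s :=
  (hf.lipschitzOnWith ha).volume_image_le

theorem volume_le (hf : IncrementsBetweenOn a b f s) (ha : 0 < a) :
    volume s ≤ ENNReal.ofReal a⁻¹ * volume (f '' s) := by
  conv_lhs => rw [← ((hf.injOn ha).leftInvOn_invFunOn).image_image]
  exact (hf.lipschitzOnWith_invFunOn ha).volume_image_le

theorem invFunOn (hf : IncrementsBetweenOn a b f s) (ha : 0 < a) :
    IncrementsBetweenOn b⁻¹ a⁻¹ (invFunOn f s) (f '' s) := by
  intro u hu v hv huv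
  set x := Function.invFunOn f s u
  set y := Function.invFunOn f s v
  have hx : x ∈ s := invFunOn_mem hu
  have hy : y ∈ s := invFunOn_mem hv
  have hfx : f x = u := invFunOn_eq hu
  have hfy : f y = v := invFunOn_eq hv
  have hxy : x ≤ y := by
    by_contra! hyx
    nlinarith [(hf y hy x hx hyx.le).1]
  obtain ⟨hlow, hup⟩ := hf x hx y hy hxy
  rw [hfx, hfy] at hlow hup
  constructor
  · rcases le_or_gt b 0 with hb | hb
    · nlinarith [inv_nonpos.2 hb]
    · rw [inv_mul_eq_div, div_le_iff₀ hb, mul_comm]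
      exact hup
  · rw [inv_mul_eq_div, le_div_iff₀ ha, mul_comm]
    exact hlow

theorem comp (hg : IncrementsBetweenOn a' b' g t) (hf : IncrementsBetweenOn a b f s)
    (hfst : MapsTo f s t) (ha : 0 ≤ a) (ha' : 0 ≤ a') (hb' : 0 ≤ b') :
    IncrementsBetweenOn (a' * a) (b' * b) (g ∘ f) s := by
  intro x hx y hy hxy
  obtain ⟨hlow, hup⟩ := hf x hx y hy hxy
  obtain ⟨hlow', hup'⟩ := hg (f x) (hfst hx) (f y) (hfst hy) (by nlinarith)
  simp only [comp_apply]
  constructor <;> nlinarith [mul_le_mul_of_nonneg_left hlow ha', mul_le_mul_of_nonneg_left hup hb']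

end IncrementsBetweenOn

namespace IsMatching

variable {X ι : Type*} {T : ℝ → X → X} {P : X → ι} {R ε δ : ℝ} {x y z : X} {A C : Set ℝ}
  {ψ χ : ℝ → ℝ}

theorem increments (h : IsMatching T P R ε x y A ψ) : IncrementsBetweenOn (1 - ε) (1 + ε) ψ A :=
  h.2.2.2.2.1

theorem length_nonneg (h : IsMatching T P R ε x y A ψ) : 0 ≤ R := by
  obtain ⟨t, ht⟩ := nonempty_of_measure_ne_zero (pos_of_gt h.2.2.1).ne'
  exact (h.2.1 ht).1.trans (h.2.1 ht).2

theorem measurableSet_image (h : IsMatching T P R ε x y A ψ) (hε : ε < 1) :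
    MeasurableSet (ψ '' A) :=
  h.1.image_of_continuousOn_injOn (h.increments.lipschitzOnWith (by linarith)).continuousOn
    (h.increments.injOn (by linarith))

theorem volume_Icc_sdiff_le (h : IsMatching T P R ε x y A ψ) (hε : ε ≤ 1) :
    volume (Icc 0 R \ A) ≤ ENNReal.ofReal (ε * R) := by
  have := _root_.volume_Icc_sdiff_le h.2.1 h.1 (mul_nonneg (by linarith) h.length_nonneg)
    h.2.2.1.le
  rwa [show R - 0 - (1 - ε) * R = ε * R by ring] at this

theorem volume_Icc_sdiff_image_le (h : IsMatching T P R ε x y A ψ) (hε : ε < 1) :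
    volume (Icc 0 R \ ψ '' A) ≤ ENNReal.ofReal (ε * R) := by
  have := _root_.volume_Icc_sdiff_le (image_subset_iff.2 h.2.2.2.1) (h.measurableSet_image hε)
    (mul_nonneg (by linarith) h.length_nonneg) h.2.2.2.2.2.1.le
  rwa [show R - 0 - (1 - ε) * R = ε * R by ring] at this

theorem mono (h : IsMatching T P R ε x y A ψ) (hεδ : ε ≤ δ) : IsMatching T P R δ x y A ψ := by
  have hR := h.length_nonneg
  obtain ⟨hA, hAR, hvolA, hψR, hψ, hvolψ, hP⟩ := h
  have hvol : ENNReal.ofReal ((1 - δ) * R) ≤ ENNReal.ofReal ((1 - ε) * R) :=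
    ENNReal.ofReal_le_ofReal (by nlinarith)
  exact ⟨hA, hAR, hvol.trans_lt hvolA, hψR, IncrementsBetweenOn.weaken hψ (by linarith)
    (by linarith), hvol.trans_lt hvolψ, hP⟩

theorem symm (h : IsMatching T P R ε x y A ψ) (hε : 0 ≤ ε) (hε' : ε ≤ 1 / 2) :
    IsMatching T P R (2 * ε) y x (ψ '' A) (invFunOn ψ A) := by
  have hR := h.length_nonneg
  have hψ := h.increments
  have hψA := h.measurableSet_image (by linarith)
  obtain ⟨hA, hAR, hvolA, hψR, -, hvolψ, hP⟩ := h
  have hinj := hψ.injOn (by linarith)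
  have hvol : ENNReal.ofReal ((1 - 2 * ε) * R) ≤ ENNReal.ofReal ((1 - ε) * R) :=
    ENNReal.ofReal_le_ofReal (by nlinarith)
  refine ⟨hψA, image_subset_iff.2 hψR, hvol.trans_lt hvolψ, fun u hu ↦ hAR (invFunOn_mem hu), ?_,
    by rw [hinj.leftInvOn_invFunOn.image_image]; exact hvol.trans_lt hvolA, ?_⟩
  · refine (hψ.invFunOn (by linarith)).weaken ?_ ?_
    · rw [← one_div, le_div_iff₀ (by linarith)]
      nlinarith
    · rw [inv_le_iff_one_le_mul₀ (by linarith)]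
      nlinarith
  · intro u hu
    conv_lhs => rw [← invFunOn_eq hu]
    exact (hP _ (invFunOn_mem hu)).symm

theorem trans (h₁ : IsMatching T P R ε x y A ψ) (h₂ : IsMatching T P R δ y z C χ) (hε : 0 ≤ ε)
    (hδ : 0 ≤ δ) (hεδ : ε + δ ≤ 1 / 2) :
    IsMatching T P R (2 * (ε + δ)) x z (A ∩ ψ ⁻¹' C) (χ ∘ ψ) := by
  have hR := h₁.length_nonneg
  have hψ := h₁.increments
  have hχ := h₂.increments
  have hlost_dom : volume (A \ ψ ⁻¹' C) ≤ ENNReal.ofReal (2 * (δ * R)) := calc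
    volume (A \ ψ ⁻¹' C) ≤ ENNReal.ofReal (1 - ε)⁻¹ * volume (ψ '' (A \ ψ ⁻¹' C)) :=
        (hψ.mono sdiff_subset).volume_le (by linarith)
    _ ≤ ENNReal.ofReal 2 * ENNReal.ofReal (δ * R) := by
        gcongr
        · rw [inv_le_iff_one_le_mul₀ (by linarith)]
          linarith
        · refine (measure_mono ?_).trans (h₂.volume_Icc_sdiff_le (by linarith))
          rintro _ ⟨t, ht, rfl⟩
          exact ⟨h₁.2.2.2.1 t ht.1, ht.2⟩
    _ = ENNReal.ofReal (2 * (δ * R)) := (ENNReal.ofReal_mul zero_le_two).symm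
  have hlost_img : volume (χ '' (C \ ψ '' A)) ≤ ENNReal.ofReal (2 * (ε * R)) := calc
    volume (χ '' (C \ ψ '' A)) ≤ ENNReal.ofReal (1 + δ) * volume (C \ ψ '' A) :=
        (hχ.mono sdiff_subset).volume_image_le (by linarith)
    _ ≤ ENNReal.ofReal 2 * ENNReal.ofReal (ε * R) := by
        gcongr
        · linarith
        · exact (measure_mono (sdiff_subset_sdiff_left h₂.2.1)).trans
            (h₁.volume_Icc_sdiff_image_le (by linarith))
    _ = ENNReal.ofReal (2 * (ε * R)) := (ENNReal.ofReal_mul zero_le_two).symm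
  obtain ⟨hA, hAR, hvolA, -, -, -, hP₁⟩ := h₁
  obtain ⟨hC, -, -, hχR, -, hvolχ, hP₂⟩ := h₂
  refine ⟨(hψ.lipschitzOnWith (by linarith)).continuousOn.measurableSet_inter_preimage hA hC,
    fun t ht ↦ hAR ht.1, ?_, fun t ht ↦ hχR _ ht.2, ?_, ?_,
    fun t ht ↦ (hP₁ t ht.1).trans (hP₂ _ ht.2)⟩
  · exact ENNReal.ofReal_lt_of_le_add hvolA (measure_le_inter_add_sdiff _ _ _) hlost_dom
      (by nlinarith) (by positivity) (by nlinarith)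
  · exact (hχ.comp (hψ.mono inter_subset_left) (fun t ht ↦ ht.2) (by linarith) (by linarith)
      (by linarith)).weaken (by nlinarith) (by nlinarith)
  · rw [image_comp, image_inter_preimage, inter_comm]
    refine ENNReal.ofReal_lt_of_le_add hvolχ ?_ hlost_img (by nlinarith) (by positivity)
      (by nlinarith)
    calc volume (χ '' C) = volume (χ '' (C ∩ ψ '' A) ∪ χ '' (C \ ψ '' A)) := by
          rw [← image_union, inter_union_sdiff]
      _ ≤ _ := measure_union_le _ _

end IsMatching

namespace Matchable

variable {X ι : Type*} {T : ℝ → X → X} {P : X → ι} {R ε δ : ℝ} {x y z : X}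

theorem mono (h : Matchable T P R ε x y) (hεδ : ε ≤ δ) : Matchable T P R δ x y :=
  let ⟨_, _, h⟩ := h; ⟨_, _, h.mono hεδ⟩

theorem symm (h : Matchable T P R ε x y) (hε : 0 ≤ ε) (hε' : ε ≤ 1 / 2) :
    Matchable T P R (2 * ε) y x :=
  let ⟨_, _, h⟩ := h; ⟨_, _, h.symm hε hε'⟩

theorem trans (h₁ : Matchable T P R ε x y) (h₂ : Matchable T P R δ y z) (hε : 0 ≤ ε)
    (hδ : 0 ≤ δ) (hεδ : ε + δ ≤ 1 / 2) : Matchable T P R (2 * (ε + δ)) x z :=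
  let ⟨_, _, h₁⟩ := h₁; let ⟨_, _, h₂⟩ := h₂; ⟨_, _, h₁.trans h₂ hε hδ hεδ⟩

end Matchable

section Packing

variable {X : Type*} [MeasurableSpace X] {μ : Measure X} [IsProbabilityMeasure μ]
  {B : X → Set X} {c : ℝ}

theorem card_le_floor_of_pairwiseDisjoint (hc : 0 < c) (hB : ∀ x, MeasurableSet (B x))
    (hμB : ∀ x, ENNReal.ofReal c ≤ μ (B x)) {s : Finset X}
    (hs : (s : Set X).PairwiseDisjoint B) : s.card ≤ ⌊1 / c⌋₊ := by
  have hsum : (s.card : ENNReal) * ENNReal.ofReal c ≤ 1 := calc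
    (s.card : ENNReal) * ENNReal.ofReal c = ∑ _x ∈ s, ENNReal.ofReal c := by
        rw [Finset.sum_const, nsmul_eq_mul]
    _ ≤ ∑ x ∈ s, μ (B x) := Finset.sum_le_sum fun x _ ↦ hμB x
    _ = μ (⋃ x ∈ s, B x) := (measure_biUnion_finset hs fun x _ ↦ hB x).symm
    _ ≤ 1 := prob_le_one
  rw [← ENNReal.ofReal_natCast, ← ENNReal.ofReal_mul (by positivity), ← ENNReal.ofReal_one,
    ENNReal.ofReal_le_ofReal_iff zero_le_one] at hsum
  exact Nat.le_floor (by rw [le_div_iff₀ hc]; linarith)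

theorem exists_finset_card_le_forall_not_disjoint (hc : 0 < c) (hB : ∀ x, MeasurableSet (B x))
    (hμB : ∀ x, ENNReal.ofReal c ≤ μ (B x)) :
    ∃ s : Finset X, s.card ≤ ⌊1 / c⌋₊ ∧ ∀ y, ∃ x ∈ s, ¬Disjoint (B y) (B x) := by
  classical
  let IsPacking : ℕ → Prop := fun n ↦
    ∃ s : Finset X, (s : Set X).PairwiseDisjoint B ∧ s.card = n
  obtain ⟨s, hs, hcard⟩ : IsPacking (Nat.findGreatest IsPacking ⌊1 / c⌋₊) :=
    Nat.findGreatest_spec (Nat.zero_le _) ⟨∅, by simp, rfl⟩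
  have hmax : ∀ t : Finset X, (t : Set X).PairwiseDisjoint B → t.card ≤ s.card := fun t ht ↦
    hcard ▸ Nat.le_findGreatest (card_le_floor_of_pairwiseDisjoint hc hB hμB ht) ⟨t, ht, rfl⟩
  refine ⟨s, hcard ▸ Nat.findGreatest_le _, fun y ↦ ?_⟩
  by_cases hy : y ∈ s
  · refine ⟨y, hy, fun hdisj ↦ ?_⟩
    have : μ (B y) ≠ 0 := (ENNReal.ofReal_pos.2 hc).trans_le (hμB y) |>.ne'
    exact this (by rw [disjoint_self.1 hdisj, bot_eq_empty, measure_empty])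
  · by_contra! hfar
    have := hmax (insert y s) (by
      rw [Finset.coe_insert]
      exact hs.insert fun x hx _ ↦ hfar x hx)
    rw [Finset.card_insert_of_notMem hy] at this
    omega

end Packing

theorem cover_by_matching_balls_general {X ι : Type*} [MeasurableSpace X]
    (μ : Measure X) [IsProbabilityMeasure μ]
    (T : ℝ → X → X)
    (P : X → ι) (R ε c : ℝ) (hε : 0 < ε) (hε' : ε ≤ 1 / 10)
    (hc : 0 < c)
    (hmeas : ∀ (x : X) (δ : ℝ), 0 < δ → MeasurableSet {y | Matchable T P R δ x y})
    (hball : ∀ x : X, ENNReal.ofReal c ≤ μ {y | Matchable T P R ε x y}) :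
    ∃ (n : ℕ) (x : Fin n → X), n ≤ ⌊1 / c⌋₊ ∧
      (⋃ i, {y | Matchable T P R (10 * ε) (x i) y}) = Set.univ := by
  obtain ⟨s, hcard, hmeet⟩ :=
    exists_finset_card_le_forall_not_disjoint hc (fun x ↦ hmeas x ε hε) hball
  refine ⟨s.card, fun i ↦ s.equivFin.symm i, hcard, eq_univ_of_forall fun y ↦ ?_⟩
  obtain ⟨x, hx, hxy⟩ := hmeet y
  obtain ⟨z, hyz, hxz⟩ := not_disjoint_iff.1 hxy
  have hzy : Matchable T P R (2 * ε) z y := Matchable.symm hyz hε.le (by linarith)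
  have : Matchable T P R (10 * ε) x y :=
    (Matchable.trans hxz hzy hε.le (by linarith) (by linarith)).mono (by linarith)
  exact mem_iUnion.2 ⟨s.equivFin ⟨x, hx⟩, by simpa using this⟩

/-- Covering criterion for standardness: if every `(R,ε)`-matching ball has
measure at least `c`, then `X` is covered by at most `⌊1/c⌋` matching balls of
radius `10ε`. -/
theorem cover_by_matching_balls {X ι : Type*} [Finite ι] [MeasurableSpace X]
    (μ : Measure X) [IsProbabilityMeasure μ]
    (T : ℝ → X → X) (hT0 : ∀ x, T 0 x = x)
    (hTadd : ∀ s t x, T (s + t) x = T s (T t x))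
    (hTpres : ∀ (t : ℝ) (S : Set X), MeasurableSet S → μ (T t ⁻¹' S) = μ S)
    (P : X → ι) (R ε c : ℝ) (hR : 1 < R) (hε : 0 < ε) (hε' : ε ≤ 1 / 10)
    (hc : 0 < c)
    (hmeas : ∀ (x : X) (δ : ℝ), 0 < δ → MeasurableSet {y | Matchable T P R δ x y})
    (hball : ∀ x : X, ENNReal.ofReal c ≤ μ {y | Matchable T P R ε x y}) :
    ∃ (n : ℕ) (x : Fin n → X), n ≤ ⌊1 / c⌋₊ ∧
      (⋃ i, {y | Matchable T P R (10 * ε) (x i) y}) = Set.univ :=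
  cover_by_matching_balls_general μ T P R ε c hε hε' hc hmeas hball
end
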